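/- If a predecoration has no quadrangular inner face, then it is a tree, and its number of degree-1 vertices is at most n_A + n_B ≤ 3; consequently such a predecoration is a path or a subdivided star with exactly 3 leaves. -/

import Mathlib

open scoped Classical

/-- A *predecoration*: a finite connected plane graph with a distinguished
outer face, all inner faces quadrangles, every inner vertex of degree at
least 3, and the counting conditions `n_A ≤ 2`, `n_A + n_B + n_C ≤ 3`. -/
structure Predecoration where
  V : Type
  [instFin : Fintype V]
  [instDec : DecidableEq V]
  G : SimpleGraph V
  [instAdj : DecidableRel G.Adj]
  conn : G.Connected
  /-- the inner faces, all of which are quadrangles -/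
  quadFaces : Finset (Finset V)
  quad_card : ∀ Q ∈ quadFaces, Q.card = 4
  /-- the vertices lying on the outer face -/
  outer : Finset V
  /-- the boundary walk of the outer face -/
  outerWalk : List V
  outerWalk_mem : ∀ v ∈ outerWalk, v ∈ outer
  outerWalk_all : ∀ v ∈ outer, v ∈ outerWalk
  outerWalk_chain : List.Chain' G.Adj (outerWalk ++ outerWalk.take 1)
  /-- every inner vertex has degree at least 3 -/
  inner_deg : ∀ v : V, v ∉ outer → 3 ≤ G.degree v
  /-- Euler's formula for a connected plane graph whose inner faces are the
  quadrangles (ordered adjacent pairs count each edge twice) -/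
  euler : 2 * (Fintype.card V + quadFaces.card + 1) =
    (Finset.univ.filter fun p : V × V => G.Adj p.1 p.2).card + 4
  /-- `n_A ≤ 2` -/
  nA_le : (Finset.univ.filter fun v : V => G.degree v = 1 ∧
      ∃ w : V, G.Adj v w ∧ G.degree w = 2).card ≤ 2
  /-- `n_A + n_B + n_C ≤ 3` -/
  nABC_le : (Finset.univ.filter fun v : V => G.degree v = 1 ∧
        ∃ w : V, G.Adj v w ∧ G.degree w = 2).card +
      (Finset.univ.filter fun v : V => G.degree v = 1 ∧
        ¬ ∃ w : V, G.Adj v w ∧ G.degree w = 2).card +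
      (quadFaces.filter fun Q => (Q.filter fun v => G.degree v = 2).card = 3).card ≤ 3

attribute [instance] Predecoration.instFin Predecoration.instDec Predecoration.instAdj

/-- `a` and `b` are consecutive on the boundary walk of the outer face, i.e.
the edge `ab` lies on the outer face. -/
def Predecoration.OuterEdge (P : Predecoration) (a b : P.V) : Prop :=
  [a, b] <:+: (P.outerWalk ++ P.outerWalk.take 1) ∨
    [b, a] <:+: (P.outerWalk ++ P.outerWalk.take 1)

/-!
Without inner faces, Euler's formula for the predecoration reads `|E| + 1 = |V|`, so the
connected graph is a tree. Every leaf is counted in `n_A` or in `n_B`, so there are at most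
three leaves. In a tree with at least two vertices the handshake lemma gives
`∑ (deg v - 2) + 2 = #leaves`, where the truncated terms `deg v - 2` vanish off the
branch vertices; with at most three leaves there is thus at most one branch vertex, of
degree exactly 3, and then exactly three leaves.
-/

open Finset

namespace SimpleGraph

variable {V : Type*} [Fintype V] {G : SimpleGraph V} [DecidableRel G.Adj]

lemma IsTree.sum_degree_sub_two_add_two [Nontrivial V] (hG : G.IsTree) :
    ∑ v, (G.degree v - 2) + 2 = #{v | G.degree v = 1} := by
  have hvertex : ∀ v, G.degree v + (if G.degree v = 1 then 1 else 0) = G.degree v - 2 + 2 := by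
    intro v
    have := hG.connected.preconnected.degree_pos_of_nontrivial v
    split_ifs <;> omega
  have hsum := Finset.sum_congr rfl fun v (_ : v ∈ univ) => hvertex v
  rw [sum_add_distrib, sum_add_distrib, sum_degrees_eq_twice_card_edges, sum_boole,
    sum_const, card_univ, smul_eq_mul] at hsum
  have hedges := hG.card_edgeFinset
  push_cast at hsum
  omega

lemma IsTree.degree_le_two_or_unique_branch_vertex (hG : G.IsTree)
    (hleaves : #{v | G.degree v = 1} ≤ 3) :
    (∀ v, G.degree v ≤ 2) ∨
      (#{v | G.degree v = 1} = 3 ∧ ∃ c, G.degree c = 3 ∧ ∀ v, v ≠ c → G.degree v ≤ 2) := by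
  rcases subsingleton_or_nontrivial V with hV | _
  · left
    intro v
    have := G.degree_lt_card_verts v
    have := Fintype.card_le_one_iff_subsingleton.2 hV
    omega
  by_cases hpath : ∀ v, G.degree v ≤ 2
  · exact Or.inl hpath
  right
  obtain ⟨c, hc⟩ := not_forall.1 hpath
  have hsum := hG.sum_degree_sub_two_add_two
  rw [← add_sum_erase univ _ (mem_univ c)] at hsum
  have hrest : ∑ v ∈ univ.erase c, (G.degree v - 2) = 0 := by omega
  refine ⟨by omega, c, by omega, fun v hv => ?_⟩
  have := sum_eq_zero_iff.1 hrest v (mem_erase.2 ⟨hv, mem_univ v⟩)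
  omega

end SimpleGraph

namespace Predecoration

lemma card_leaves_le_three (P : Predecoration) : #{v | P.G.degree v = 1} ≤ 3 := by
  have hsplit := card_filter_add_card_filter_not (s := {v | P.G.degree v = 1})
    (fun v => ∃ w, P.G.Adj v w ∧ P.G.degree w = 2)
  rw [filter_filter, filter_filter] at hsplit
  have := P.nABC_le
  omega

lemma isTree_of_quadFaces_eq_empty (P : Predecoration) (hq : P.quadFaces = ∅) : P.G.IsTree := by
  have heuler := P.euler
  rw [hq, card_empty, ← SimpleGraph.two_mul_card_edgeFinset] at heuler
  refine SimpleGraph.isTree_iff_connected_and_card.2 ⟨P.conn, ?_⟩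
  rw [Nat.card_eq_fintype_card, Nat.card_eq_fintype_card, ← SimpleGraph.edgeFinset_card]
  omega

end Predecoration

/-- If a predecoration has no quadrangular inner face, then
it is a tree with at most `n_A + n_B ≤ 3` vertices of degree 1;
consequently it is a path (all degrees at most 2) or a subdivided star with
exactly 3 leaves (one vertex of degree 3, all others of degree at most 2). -/
theorem quadfree_predecoration_is_tree_or_star (P : Predecoration)
    (hq : P.quadFaces = ∅) :
    P.G.IsTree ∧
      (Finset.univ.filter fun v : P.V => P.G.degree v = 1).card ≤ 3 ∧
      ((∀ v : P.V, P.G.degree v ≤ 2) ∨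
        ((Finset.univ.filter fun v : P.V => P.G.degree v = 1).card = 3 ∧
          ∃ c : P.V, P.G.degree c = 3 ∧ ∀ v : P.V, v ≠ c → P.G.degree v ≤ 2)) := by
  have htree := P.isTree_of_quadFaces_eq_empty hq
  exact ⟨htree, P.card_leaves_le_three,
    htree.degree_le_two_or_unique_branch_vertex P.card_leaves_le_three⟩
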